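/- arXiv:2112.11072 — 2 statements merged into one kernel-verified Lean document; each statement's English description precedes it below -/
import Mathlib

section
/- Let λ_1, Δ_1, λ_r, Δ_r, δ_r, C_d, q be positive reals with q ≥ 1 such that Δ_1 − δ_r·C_d·ln q > 0. Suppose 1/(1 + λ_1·Δ_1) = 1/(1 + λ_r·Δ_r) and Δ_r < Δ_1 − δ_r·C_d·ln q. Then the effective block generation rate of the order-r blockchain satisfies λ_r/(1 + λ_r·Δ_r) > (λ_1·Δ_1) / ((Δ_1 − δ_r·C_d·ln q)·(1 + λ_1·Δ_1)). -/
/-- Under equal PoW efficiency with the root and the sub-network delay bound,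
the effective block generation rate of the order-`r` blockchain satisfies
`lam_r / (1 + lam_r * Δ_r) > (lam_1 * Δ_1) / ((Δ_1 - δ_r * C_d * ln q) * (1 + lam_1 * Δ_1))`. -/
theorem order_r_effective_rate_lower_bound
    (lam1 Δ1 lamr Δr δr Cd q : ℝ)
    (hlam1 : 0 < lam1) (hΔ1 : 0 < Δ1) (hlamr : 0 < lamr) (hΔr : 0 < Δr)
    (hδr : 0 < δr) (hCd : 0 < Cd) (hq : 1 ≤ q)
    (hpos : 0 < Δ1 - δr * Cd * Real.log q)
    (heff : 1 / (1 + lam1 * Δ1) = 1 / (1 + lamr * Δr))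
    (hdelay : Δr < Δ1 - δr * Cd * Real.log q) :
    lamr / (1 + lamr * Δr) >
      (lam1 * Δ1) / ((Δ1 - δr * Cd * Real.log q) * (1 + lam1 * Δ1)) := by
  have h1 : (0:ℝ) < 1 + lam1 * Δ1 := by positivity
  have h2 : (0:ℝ) < 1 + lamr * Δr := by positivity
  have heq : 1 + lam1 * Δ1 = 1 + lamr * Δr := by
    field_simp at heff
    linarith
  have hprod : lam1 * Δ1 = lamr * Δr := by linarith
  have key : lamr / (1 + lamr * Δr) = (lam1 * Δ1) / (Δr * (1 + lam1 * Δ1)) := by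
    rw [heq, hprod]
    field_simp
  rw [key]
  apply div_lt_div_of_pos_left
  · have := mul_pos hlam1 hΔ1; linarith [hprod]
  · positivity
  · exact mul_lt_mul_of_pos_right hdelay h1
end

section
/- Let λ_1, Δ_1, δ, C_d be positive reals and let N > 1 be real. For q ∈ [1, N), define the order-r sub-network delay Δ(q) = δ·C_d·ln(N/q), the equal-efficiency block generation rate λ(q) = (λ_1·Δ_1)/Δ(q), and the aggregate throughput T(q) = q·λ(q)/(1 + λ(q)·Δ(q)). Then for all reals q_1, q_2 with 1 ≤ q_1 < q_2 < N, it holds that T(q_2) > (q_2/q_1)·T(q_1); that is, the aggregate transaction throughput of an order scales superlinearly with the number q of blockchains in that order. -/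
/-- Superlinear scaling of aggregate throughput (Theorem 2 of the paper).
With `Δ(q) = δ * C_d * ln (N / q)`, equal-efficiency rate `lam(q) = (lam_1 * Δ_1) / Δ(q)`,
and aggregate throughput `T(q) = q * (lam(q) / (1 + lam(q) * Δ(q)))`, for all
`1 ≤ q₁ < q₂ < N` we have `T(q₂) > (q₂ / q₁) * T(q₁)`. -/
theorem aggregate_throughput_superlinear
    (lam1 Δ1 δ Cd N : ℝ)
    (hlam1 : 0 < lam1) (hΔ1 : 0 < Δ1) (hδ : 0 < δ) (hCd : 0 < Cd) (hN : 1 < N)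
    (Δ lam T : ℝ → ℝ)
    (hΔ : ∀ q, Δ q = δ * Cd * Real.log (N / q))
    (hlam : ∀ q, lam q = (lam1 * Δ1) / Δ q)
    (hT : ∀ q, T q = q * (lam q / (1 + lam q * Δ q))) :
    ∀ q1 q2 : ℝ, 1 ≤ q1 → q1 < q2 → q2 < N → T q2 > (q2 / q1) * T q1 := by
  intro q1 q2 hq1 h12 h2N
  have hq1pos : 0 < q1 := lt_of_lt_of_le one_pos hq1
  have hq2pos : 0 < q2 := hq1pos.trans h12
  set c := lam1 * Δ1 with hc
  have hcpos : 0 < c := mul_pos hlam1 hΔ1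
  -- Δ positivity and monotonicity
  have hΔpos : ∀ q, 0 < q → q < N → 0 < Δ q := by
    intro q hq hqN
    rw [hΔ]
    exact mul_pos (mul_pos hδ hCd) (Real.log_pos ((one_lt_div hq).2 hqN))
  have hΔ1p : 0 < Δ q1 := hΔpos q1 hq1pos (h12.trans h2N)
  have hΔ2p : 0 < Δ q2 := hΔpos q2 hq2pos h2N
  have hΔlt : Δ q2 < Δ q1 := by
    rw [hΔ, hΔ]
    have : Real.log (N / q2) < Real.log (N / q1) := by
      apply Real.log_lt_log (div_pos (hq2pos.trans h2N) hq2pos)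
      exact div_lt_div_of_pos_left (hq2pos.trans h2N) hq1pos h12
    exact (mul_lt_mul_iff_right₀ (mul_pos hδ hCd)).2 this
  -- rewrite T
  have hlamΔ : ∀ q, 0 < Δ q → lam q * Δ q = c := by
    intro q hq
    rw [hlam]
    field_simp
  have hTform : ∀ q, 0 < Δ q → T q = q * ((c / Δ q) / (1 + c)) := by
    intro q hq
    rw [hT, hlamΔ q hq, hlam]
  rw [hTform q1 hΔ1p, hTform q2 hΔ2p]
  have h1c : 0 < 1 + c := by linarith
  have hRHS : q2 / q1 * (q1 * (c / Δ q1 / (1 + c))) = q2 * (c / Δ q1 / (1 + c)) := by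
    field_simp
  rw [hRHS]
  have hkey : c / Δ q1 < c / Δ q2 := div_lt_div_of_pos_left hcpos hΔ2p hΔlt
  have : (c / Δ q1) / (1 + c) < (c / Δ q2) / (1 + c) :=
    div_lt_div_of_pos_right hkey h1c
  exact (mul_lt_mul_iff_right₀ hq2pos).2 this
end
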